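/- arXiv:1511.01956 — 5 statements merged into one kernel-verified Lean document; each statement's English description precedes it below -/
import Mathlib

section
/- Under the stationary two-sequence k-mer model, the expected value of the π-weighted squared difference of k-mer count vectors satisfies E[ ∑_{W ∈ [L]^k} (1/π^W) (X₁^W − X₂^W)² ] = 2(n − k + 1)(L^k − (tr M)^k), where tr M denotes the trace of M. -/
lemma chain_lemma {L : ℕ} (π : Fin L → ℝ) (hπ1 : ∑ w, π w = 1)
    (N : Matrix (Fin L) (Fin L) ℝ) (hN : ∀ w, ∑ u, N w u = 1)
    (p : ℕ) (hp : 1 ≤ p) :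
    ∀ k : ℕ, ∑ W : Fin k → Fin L, ∏ j : Fin k,
      (if h : j.1 + p < k then N (W ⟨j.1 + p, h⟩) (W j) else π (W j)) = 1
  | 0 => by simp
  | (k+1) => by
    rw [← Equiv.sum_comp (Fin.consEquiv (fun _ : Fin (k+1) => Fin L)), Fintype.sum_prod_type]
    have key : ∀ (x : Fin L) (W' : Fin k → Fin L),
        (∏ j : Fin (k+1), (if h : j.1 + p < k+1
            then N ((Fin.consEquiv (fun _ : Fin (k+1) => Fin L)) (x, W') ⟨j.1 + p, h⟩)
                   ((Fin.consEquiv (fun _ : Fin (k+1) => Fin L)) (x, W') j)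
            else π ((Fin.consEquiv (fun _ : Fin (k+1) => Fin L)) (x, W') j)))
        = (if h : p < k + 1 then N (W' ⟨p - 1, by omega⟩) x else π x) *
          ∏ j : Fin k, (if h : j.1 + p < k then N (W' ⟨j.1 + p, h⟩) (W' j) else π (W' j)) := by
      intro x W'
      rw [Fin.prod_univ_succ]
      congr 1
      · simp only [Fin.consEquiv_apply, Fin.val_zero, Nat.zero_add]
        by_cases h : p < k + 1
        · rw [dif_pos h, dif_pos h, Fin.cons_zero]
          congr 1
          have : (⟨p, h⟩ : Fin (k+1)) = Fin.succ ⟨p - 1, by omega⟩ := by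
            ext; simp; omega
          rw [this, Fin.cons_succ]
        · rw [dif_neg h, dif_neg h, Fin.cons_zero]
      · apply Finset.prod_congr rfl
        intro j _
        simp only [Fin.consEquiv_apply, Fin.val_succ]
        by_cases h : j.1 + p < k
        · rw [dif_pos (by omega : j.1 + 1 + p < k + 1), dif_pos h]
          have h1 : (⟨j.1 + 1 + p, by omega⟩ : Fin (k+1)) = Fin.succ ⟨j.1 + p, h⟩ := by
            ext; simp; omega
          rw [h1, Fin.cons_succ, Fin.cons_succ]
        · rw [dif_neg (by omega : ¬ (j.1 + 1 + p < k + 1)), dif_neg h, Fin.cons_succ]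
    calc (∑ x : Fin L, ∑ W' : Fin k → Fin L, ∏ j : Fin (k+1), _) 
        = ∑ W' : Fin k → Fin L, ∑ x : Fin L,
            (if h : p < k + 1 then N (W' ⟨p - 1, by omega⟩) x else π x) *
            ∏ j : Fin k, (if h : j.1 + p < k then N (W' ⟨j.1 + p, h⟩) (W' j) else π (W' j)) := by
          rw [Finset.sum_comm]
          exact Finset.sum_congr rfl fun W' _ => Finset.sum_congr rfl fun x _ => key x W'
      _ = 1 := by
          have IH := chain_lemma π hπ1 N hN p hp k
          rw [← IH]
          apply Finset.sum_congr rfl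
          intro W' _
          rw [← Finset.sum_mul]
          have : (∑ x, if h : p < k + 1 then N (W' ⟨p - 1, by omega⟩) x else π x) = 1 := by
            by_cases h : p < k + 1
            · simp only [dif_pos h]; exact hN _
            · simp only [dif_neg h]; exact hπ1
          rw [this, one_mul]
lemma aux_sum_prod {ι α : Type*} [Fintype ι] [DecidableEq ι] [Fintype α] (f : ι → α → ℝ) :
    ∑ ω : ι → α, ∏ i, f i (ω i) = ∏ i, ∑ x, f i x :=
  (Fintype.prod_sum f).symm

def qf {L : ℕ} (o : Option (Fin L)) (x : Fin L) : ℝ :=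
  match o with
  | none => 1
  | some a => if x = a then 1 else 0

def cf {L : ℕ} (n k i : ℕ) (W : Fin k → Fin L) (s : Fin n) : Option (Fin L) :=
  if h : i ≤ s.1 ∧ s.1 < i + k then some (W ⟨s.1 - i, by omega⟩) else none

def rrf {L : ℕ} (π : Fin L → ℝ) (N : Matrix (Fin L) (Fin L) ℝ) :
    Option (Fin L) → Option (Fin L) → ℝ
  | none, none => 1
  | some a, none => π a
  | none, some b => π b
  | some a, some b => π a * N a b

lemma ind_prod {k : ℕ} (P : Fin k → Prop) [DecidablePred P] :
    (if ∀ j, P j then (1:ℝ) else 0) = ∏ j, if P j then 1 else 0 := by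
  by_cases h : ∀ j, P j
  · simp [h]
  · rw [if_neg h]
    push_neg at h
    obtain ⟨j, hj⟩ := h
    exact (Finset.prod_eq_zero (Finset.mem_univ j) (by simp [hj])).symm

lemma prod_block {n k i : ℕ} (hin : i + k ≤ n) (g : Fin n → ℝ)
    (hoff : ∀ s : Fin n, (s.1 < i ∨ i + k ≤ s.1) → g s = 1)
    (g' : Fin k → ℝ)
    (hmatch : ∀ (j : Fin k) (s : Fin n), s.1 = i + j.1 → g s = g' j) :
    ∏ s, g s = ∏ j, g' j := by
  have h1 : ∏ j : Fin k, g' j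
      = ∏ s ∈ Finset.univ.filter (fun s : Fin n => i ≤ s.1 ∧ s.1 < i + k), g s :=
    Finset.prod_bij' (fun j _ => (⟨i + j.1, by omega⟩ : Fin n))
      (fun s hs => (⟨s.1 - i, by simp at hs; omega⟩ : Fin k))
      (fun a ha => by simp)
      (fun a ha => Finset.mem_univ _)
      (fun a ha => by ext; simp)
      (fun a ha => by ext; simp at ha ⊢; omega)
      (fun a ha => (hmatch a ⟨i + a.1, by omega⟩ rfl).symm)
  rw [h1]
  exact (Finset.prod_subset (Finset.subset_univ _) (by
    intro x _ hx
    simp at hx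
    apply hoff
    by_cases h : i ≤ x.1
    · right; exact hx h
    · left; omega)).symm

lemma bridge {L k n : ℕ} (i : ℕ) (hin : i + k ≤ n) (W : Fin k → Fin L)
    (v : Fin n → Fin L) :
    (if ∀ j : Fin k, v ⟨i + j.1, by omega⟩ = W j then (1:ℝ) else 0)
      = ∏ s : Fin n, qf (cf n k i W s) (v s) := by
  rw [ind_prod]
  refine (prod_block hin _ ?_ _ ?_).symm
  · intro s hs
    have : cf n k i W s = none := by unfold cf; rw [dif_neg]; omega
    rw [this]; rfl
  · intro j s hs
    have hseq : s = ⟨i + j.1, by omega⟩ := Fin.ext hs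
    rw [hseq]
    have : cf n k i W ⟨i + j.1, by omega⟩ = some (W j) := by
      unfold cf
      rw [dif_pos ⟨by omega, by omega⟩]
      congr 1
      congr 1
      ext
      simp
    rw [this]
    rfl

lemma region {L k n : ℕ} (π : Fin L → ℝ) (N : Matrix (Fin L) (Fin L) ℝ)
    (i i' : ℕ) (hii : i ≤ i') (hin : i' + k ≤ n) (W : Fin k → Fin L) :
    ∏ s : Fin n, rrf π N (cf n k i W s) (cf n k i' W s)
      = (∏ j, π (W j)) * ∏ j : Fin k,
          (if h : j.1 + (i' - i) < k then N (W ⟨j.1 + (i' - i), by omega⟩) (W j)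
           else π (W j)) := by
  have hW : ∀ (a b : ℕ) (ha : a < k) (hb : b < k), a = b → W ⟨a, ha⟩ = W ⟨b, hb⟩ := by
    intro a b ha hb e; subst e; rfl
  have key : ∀ s : Fin n, rrf π N (cf n k i W s) (cf n k i' W s)
      = (if h : i ≤ s.1 ∧ s.1 < i + k then π (W ⟨s.1 - i, by omega⟩) else 1) *
        (if h : i' ≤ s.1 ∧ s.1 < i' + k then
          (if h2 : s.1 < i + k then
            N (W ⟨s.1 - i, by omega⟩) (W ⟨s.1 - i', by omega⟩)
           else π (W ⟨s.1 - i', by omega⟩)) else 1) := by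
    intro s
    unfold cf
    by_cases h1 : i ≤ s.1 ∧ s.1 < i + k
    · by_cases h2 : i' ≤ s.1 ∧ s.1 < i' + k
      · rw [dif_pos h1, dif_pos h2, dif_pos h1, dif_pos h2, dif_pos h1.2]
        rfl
      · rw [dif_pos h1, dif_neg h2, dif_pos h1, dif_neg h2, mul_one]
        rfl
    · by_cases h2 : i' ≤ s.1 ∧ s.1 < i' + k
      · rw [dif_neg h1, dif_pos h2, dif_neg h1, dif_pos h2, one_mul,
          dif_neg (by omega : ¬ s.1 < i + k)]
        rfl
      · rw [dif_neg h1, dif_neg h2, dif_neg h1, dif_neg h2, mul_one]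
        rfl
  rw [Finset.prod_congr rfl (fun s _ => key s), Finset.prod_mul_distrib]
  congr 1
  · refine prod_block (i := i) (by omega) _ ?_ _ ?_
    · intro s hs; rw [dif_neg]; omega
    · intro j s hs
      rw [dif_pos (by omega : i ≤ s.1 ∧ s.1 < i + k)]
      exact congrArg π (hW _ _ _ _ (by omega))
  · refine prod_block (i := i') hin _ ?_ _ ?_
    · intro s hs; rw [dif_neg]; omega
    · intro j s hs
      rw [dif_pos (by omega : i' ≤ s.1 ∧ s.1 < i' + k)]
      by_cases h2 : s.1 < i + k
      · rw [dif_pos h2, dif_pos (by omega : j.1 + (i' - i) < k)]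
        exact congrArg₂ (fun a b => N a b) (hW _ _ _ _ (by omega)) (hW _ _ _ _ (by omega))
      · rw [dif_neg h2, dif_neg (by omega : ¬ j.1 + (i' - i) < k)]
        exact congrArg π (hW _ _ _ _ (by omega))

lemma pair_exp {L k n : ℕ} (π : Fin L → ℝ) (p0 : Fin L × Fin L → ℝ)
    (φ ψ : Fin L × Fin L → Fin L) (N : Matrix (Fin L) (Fin L) ℝ)
    (h00 : ∑ x, p0 x = 1)
    (h10 : ∀ a, ∑ x, p0 x * qf (some a) (φ x) = π a)
    (h01 : ∀ b, ∑ x, p0 x * qf (some b) (ψ x) = π b)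
    (h11 : ∀ a b, ∑ x, p0 x * (qf (some a) (φ x) * qf (some b) (ψ x)) = π a * N a b)
    (i i' : ℕ) (hii : i ≤ i') (hin : i' + k ≤ n) (W : Fin k → Fin L) :
    ∑ ω : Fin n → Fin L × Fin L, (∏ s, p0 (ω s)) *
      ((if ∀ j : Fin k, φ (ω ⟨i + j.1, by omega⟩) = W j then 1 else 0) *
       (if ∀ j : Fin k, ψ (ω ⟨i' + j.1, by omega⟩) = W j then 1 else 0))
    = (∏ j, π (W j)) * ∏ j : Fin k,
        (if h : j.1 + (i' - i) < k then N (W ⟨j.1 + (i' - i), by omega⟩) (W j)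
         else π (W j)) := by
  have step1 : ∀ ω : Fin n → Fin L × Fin L,
      (∏ s, p0 (ω s)) *
      ((if ∀ j : Fin k, φ (ω ⟨i + j.1, by omega⟩) = W j then (1:ℝ) else 0) *
       (if ∀ j : Fin k, ψ (ω ⟨i' + j.1, by omega⟩) = W j then 1 else 0))
      = ∏ s : Fin n, (p0 (ω s) *
          (qf (cf n k i W s) (φ (ω s)) * qf (cf n k i' W s) (ψ (ω s)))) := by
    intro ω
    rw [bridge i (by omega) W (fun s => φ (ω s)),
      bridge i' hin W (fun s => ψ (ω s)),
      ← Finset.prod_mul_distrib, ← Finset.prod_mul_distrib]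
  rw [Finset.sum_congr rfl (fun ω _ => step1 ω)]
  rw [aux_sum_prod (fun s x => p0 x * (qf (cf n k i W s) (φ x) * qf (cf n k i' W s) (ψ x)))]
  have persite : ∀ s : Fin n,
      (∑ x, p0 x * (qf (cf n k i W s) (φ x) * qf (cf n k i' W s) (ψ x)))
      = rrf π N (cf n k i W s) (cf n k i' W s) := by
    intro s
    rcases hc : cf n k i W s with _ | a <;> rcases hd : cf n k i' W s with _ | b
    · simp only [rrf, qf]; simpa using h00
    · simp only [rrf, qf]; simpa [qf] using h01 b
    · simp only [rrf, qf]; simpa [qf] using h10 a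
    · simp only [rrf]; exact h11 a b
  rw [Finset.prod_congr rfl (fun s _ => persite s)]
  exact region π N i i' hii hin W
lemma main_pair {L k n : ℕ} (hk : 1 ≤ k) (hkn : k ≤ n)
    (M : Matrix (Fin L) (Fin L) ℝ) (π : Fin L → ℝ)
    (hπ0 : ∀ w, 0 < π w) (hπ1 : ∑ w, π w = 1)
    (h00 : ∑ x : Fin L × Fin L, π x.1 * M x.1 x.2 = 1)
    (φ ψ : Fin L × Fin L → Fin L) (N : Matrix (Fin L) (Fin L) ℝ)
    (h10 : ∀ a, ∑ x : Fin L × Fin L, (π x.1 * M x.1 x.2) * qf (some a) (φ x) = π a)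
    (h01 : ∀ b, ∑ x : Fin L × Fin L, (π x.1 * M x.1 x.2) * qf (some b) (ψ x) = π b)
    (h11 : ∀ a b, ∑ x : Fin L × Fin L, (π x.1 * M x.1 x.2) *
      (qf (some a) (φ x) * qf (some b) (ψ x)) = π a * N a b)
    (hNrow : ∀ w, ∑ u, N w u = 1)
    (i i' : Fin (n - k + 1)) (hii : i.1 ≤ i'.1) :
    ∑ W : Fin k → Fin L, (1 / ∏ j, π (W j)) *
      (∑ ω : Fin n → Fin L × Fin L, (∏ s, π (ω s).1 * M (ω s).1 (ω s).2) *
        ((if ∀ j : Fin k, φ (ω ⟨i.1 + j.1, by have := i.2; have := j.2; omega⟩) = W j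
            then 1 else 0) *
         (if ∀ j : Fin k, ψ (ω ⟨i'.1 + j.1, by have := i'.2; have := j.2; omega⟩) = W j
            then 1 else 0)))
    = if i = i' then (∑ w, N w w)^k else 1 := by
  have hin' : i'.1 + k ≤ n := by have := i'.2; omega
  have hrw : ∀ W : Fin k → Fin L,
      (∑ ω : Fin n → Fin L × Fin L, (∏ s, π (ω s).1 * M (ω s).1 (ω s).2) *
        ((if ∀ j : Fin k, φ (ω ⟨i.1 + j.1, by have := i.2; have := j.2; omega⟩) = W j
            then 1 else 0) *
         (if ∀ j : Fin k, ψ (ω ⟨i'.1 + j.1, by have := i'.2; have := j.2; omega⟩) = W j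
            then 1 else 0)))
      = (∏ j, π (W j)) * ∏ j : Fin k,
        (if h : j.1 + (i'.1 - i.1) < k then N (W ⟨j.1 + (i'.1 - i.1), by omega⟩) (W j)
         else π (W j)) :=
    fun W => pair_exp π (fun x => π x.1 * M x.1 x.2) φ ψ N h00 h10 h01 h11
      i.1 i'.1 hii hin' W
  rw [Finset.sum_congr rfl fun W _ => by rw [hrw W]]
  have hcancel : ∀ W : Fin k → Fin L,
      (1 / ∏ j, π (W j)) * ((∏ j, π (W j)) * ∏ j : Fin k,
        (if h : j.1 + (i'.1 - i.1) < k then N (W ⟨j.1 + (i'.1 - i.1), by omega⟩) (W j)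
         else π (W j)))
      = ∏ j : Fin k,
        (if h : j.1 + (i'.1 - i.1) < k then N (W ⟨j.1 + (i'.1 - i.1), by omega⟩) (W j)
         else π (W j)) := by
    intro W
    rw [one_div, inv_mul_cancel_left₀ (ne_of_gt (Finset.prod_pos fun j _ => hπ0 (W j)))]
  rw [Finset.sum_congr rfl fun W _ => hcancel W]
  by_cases he : i = i'
  · rw [if_pos he]
    subst he
    have hdiag : ∀ (W : Fin k → Fin L) (j : Fin k),
        (if h : j.1 + (i.1 - i.1) < k then N (W ⟨j.1 + (i.1 - i.1), by omega⟩) (W j)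
         else π (W j)) = N (W j) (W j) := by
      intro W j
      rw [dif_pos (by omega : j.1 + (i.1 - i.1) < k)]
      congr 2
      ext
      simp
    rw [Finset.sum_congr rfl fun W _ => Finset.prod_congr rfl fun j _ => hdiag W j]
    exact (Fintype.sum_pow (fun w => N w w) k).symm
  · rw [if_neg he]
    have hp : 1 ≤ i'.1 - i.1 := by
      have : i.1 ≠ i'.1 := fun h => he (Fin.ext h)
      omega
    exact chain_lemma π hπ1 N hNrow (i'.1 - i.1) hp k

lemma sum4_reorder {α β γ : Type*} [Fintype α] [Fintype β] [Fintype γ]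
    (f : α → β → γ → γ → ℝ) :
    ∑ ω : α, ∑ W : β, ∑ i : γ, ∑ i' : γ, f ω W i i'
      = ∑ i : γ, ∑ i' : γ, ∑ W : β, ∑ ω : α, f ω W i i' := by
  calc ∑ ω : α, ∑ W : β, ∑ i : γ, ∑ i' : γ, f ω W i i'
      = ∑ W : β, ∑ ω : α, ∑ i : γ, ∑ i' : γ, f ω W i i' := Finset.sum_comm
    _ = ∑ W : β, ∑ i : γ, ∑ ω : α, ∑ i' : γ, f ω W i i' :=
      Finset.sum_congr rfl fun W _ => Finset.sum_comm
    _ = ∑ W : β, ∑ i : γ, ∑ i' : γ, ∑ ω : α, f ω W i i' :=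
      Finset.sum_congr rfl fun W _ => Finset.sum_congr rfl fun i _ => Finset.sum_comm
    _ = ∑ i : γ, ∑ W : β, ∑ i' : γ, ∑ ω : α, f ω W i i' := Finset.sum_comm
    _ = ∑ i : γ, ∑ i' : γ, ∑ W : β, ∑ ω : α, f ω W i i' :=
      Finset.sum_congr rfl fun i _ => Finset.sum_comm


/-!
Stationary two-sequence k-mer model: sites indexed by `Fin n`, states in `Fin L`,
the pair of sequences is a random element of `Fin n → Fin L × Fin L` whose sites
are i.i.d. with joint single-site distribution `π(w) * M(w,u)`, where `π` is a
strictly positive stationary distribution of the row-stochastic matrix `M`.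
`X₁ W`, `X₂ W` count occurrences of the k-mer `W` in the two sequences.
-/
theorem kmer_expected_weighted_squared_distance
    (L k n : ℕ) (hL : 1 ≤ L) (hk : 1 ≤ k) (hkn : k ≤ n)
    (M : Matrix (Fin L) (Fin L) ℝ)
    (hM0 : ∀ w u, 0 ≤ M w u)
    (hM1 : ∀ w, ∑ u, M w u = 1)
    (π : Fin L → ℝ)
    (hπ0 : ∀ w, 0 < π w)
    (hπ1 : ∑ w, π w = 1)
    (hstat : ∀ u, ∑ w, π w * M w u = π u)
    (prob : (Fin n → Fin L × Fin L) → ℝ)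
    (hprob : ∀ ω, prob ω = ∏ i, π (ω i).1 * M (ω i).1 (ω i).2)
    (E : ((Fin n → Fin L × Fin L) → ℝ) → ℝ)
    (hE : ∀ f, E f = ∑ ω, prob ω * f ω)
    (X₁ X₂ : (Fin k → Fin L) → (Fin n → Fin L × Fin L) → ℝ)
    (hX₁ : ∀ W ω, X₁ W ω = ∑ i : Fin (n - k + 1),
      if ∀ j : Fin k, (ω ⟨i.1 + j.1, by have := i.2; have := j.2; omega⟩).1 = W j
        then 1 else 0)
    (hX₂ : ∀ W ω, X₂ W ω = ∑ i : Fin (n - k + 1),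
      if ∀ j : Fin k, (ω ⟨i.1 + j.1, by have := i.2; have := j.2; omega⟩).2 = W j
        then 1 else 0) :
    E (fun ω => ∑ W : Fin k → Fin L,
        (1 / ∏ j, π (W j)) * (X₁ W ω - X₂ W ω) ^ 2)
      = 2 * ((n - k + 1 : ℕ) : ℝ) * ((L : ℝ) ^ k - (Matrix.trace M) ^ k) := by
  classical
  -- single-site computations
  have h00 : ∑ x : Fin L × Fin L, π x.1 * M x.1 x.2 = 1 := by
    rw [Fintype.sum_prod_type]
    simp only [← Finset.mul_sum, hM1, mul_one, hπ1]
  have hfst : ∀ a, ∑ x : Fin L × Fin L, (π x.1 * M x.1 x.2) * qf (some a) x.1 = π a := by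
    intro a
    rw [Fintype.sum_prod_type]
    simp only [qf, mul_ite, mul_one, mul_zero, Finset.sum_ite_irrel,
      Finset.sum_const_zero, ← Finset.mul_sum, hM1, mul_one, Finset.sum_ite_eq',
      Finset.mem_univ, if_true]
  have hsnd : ∀ b, ∑ x : Fin L × Fin L, (π x.1 * M x.1 x.2) * qf (some b) x.2 = π b := by
    intro b
    rw [Fintype.sum_prod_type]
    simp only [qf, mul_ite, mul_one, mul_zero, Finset.sum_ite_eq', Finset.mem_univ, if_true]
    exact hstat b
  have h11FF : ∀ a b, ∑ x : Fin L × Fin L, (π x.1 * M x.1 x.2) *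
      (qf (some a) x.1 * qf (some b) x.1) = π a * (1 : Matrix (Fin L) (Fin L) ℝ) a b := by
    intro a b
    rw [Fintype.sum_prod_type, Matrix.one_apply]
    simp only [qf, mul_ite, mul_one, mul_zero, ite_mul, zero_mul, one_mul]
    by_cases hab : a = b
    · subst hab
      rw [if_pos rfl]
      have hcollapse : ∀ (x u : Fin L),
          (if x = a then if x = a then π x * M x u else 0 else 0)
            = if x = a then π x * M x u else 0 := by
        intro x u; by_cases h : x = a <;> simp [h]
      rw [Finset.sum_congr rfl fun x _ => Finset.sum_congr rfl fun u _ => hcollapse x u]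
      simp only [Finset.sum_ite_irrel, Finset.sum_const_zero, ← Finset.mul_sum, hM1, mul_one,
        Finset.sum_ite_eq', Finset.mem_univ, if_true]
    · rw [if_neg hab]
      apply Finset.sum_eq_zero; intro x _
      apply Finset.sum_eq_zero; intro u _
      by_cases h : x = b
      · subst h; rw [if_pos rfl, if_neg (fun e => hab e.symm)]
      · rw [if_neg h]
  have h11FS : ∀ a b, ∑ x : Fin L × Fin L, (π x.1 * M x.1 x.2) *
      (qf (some a) x.1 * qf (some b) x.2) = π a * M a b := by
    intro a b
    rw [Fintype.sum_prod_type]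
    simp only [qf, mul_ite, mul_one, mul_zero, ite_mul, zero_mul, one_mul]
    simp only [Finset.sum_ite_eq', Finset.mem_univ, if_true]
  have h11SF : ∀ a b, ∑ x : Fin L × Fin L, (π x.1 * M x.1 x.2) *
      (qf (some a) x.2 * qf (some b) x.1)
      = π a * (Matrix.of fun a b : Fin L => π b * M b a / π a) a b := by
    intro a b
    rw [Fintype.sum_prod_type]
    simp only [Matrix.of_apply, qf, mul_ite, mul_one, mul_zero, ite_mul, zero_mul, one_mul]
    simp only [Finset.sum_ite_irrel, Finset.sum_const_zero, Finset.sum_ite_eq',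
      Finset.mem_univ, if_true]
    rw [mul_comm (π a), div_mul_cancel₀ _ (ne_of_gt (hπ0 a))]
  have h11SS : ∀ a b, ∑ x : Fin L × Fin L, (π x.1 * M x.1 x.2) *
      (qf (some a) x.2 * qf (some b) x.2) = π a * (1 : Matrix (Fin L) (Fin L) ℝ) a b := by
    intro a b
    rw [Fintype.sum_prod_type, Matrix.one_apply]
    simp only [qf, mul_ite, mul_one, mul_zero, ite_mul, zero_mul, one_mul]
    by_cases hab : a = b
    · subst hab
      rw [if_pos rfl]
      have hcollapse : ∀ (x u : Fin L),
          (if u = a then if u = a then π x * M x u else 0 else 0)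
            = if u = a then π x * M x u else 0 := by
        intro x u; by_cases h : u = a <;> simp [h]
      rw [Finset.sum_congr rfl fun x _ => Finset.sum_congr rfl fun u _ => hcollapse x u]
      simp only [Finset.sum_ite_eq', Finset.mem_univ, if_true]
      exact hstat a
    · rw [if_neg hab]
      apply Finset.sum_eq_zero; intro x _
      apply Finset.sum_eq_zero; intro u _
      by_cases h : u = b
      · subst h; rw [if_pos rfl, if_neg (fun e => hab e.symm)]
      · rw [if_neg h]
  have hΔrow : ∀ w, ∑ u, (1 : Matrix (Fin L) (Fin L) ℝ) w u = 1 := by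
    intro w; simp [Matrix.one_apply]
  have hNrow : ∀ w, ∑ u, (Matrix.of fun a b : Fin L => π b * M b a / π a) w u = 1 := by
    intro w
    simp only [Matrix.of_apply]
    rw [← Finset.sum_div, hstat, div_self (ne_of_gt (hπ0 w))]
  have hΔdiag : (∑ w, (1 : Matrix (Fin L) (Fin L) ℝ) w w) = (L : ℝ) := by
    simp
  have hNdiag : (∑ w, (Matrix.of fun a b : Fin L => π b * M b a / π a) w w)
      = ∑ w, M w w := by
    refine Finset.sum_congr rfl fun w _ => ?_
    simp only [Matrix.of_apply]
    exact mul_div_cancel_left₀ _ (ne_of_gt (hπ0 w))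
  -- the four instantiated pair expectations
  have pairhalf : ∀ i i' : Fin (n - k + 1), i.1 ≤ i'.1 →
      (∑ W : Fin k → Fin L, ∑ ω : Fin n → Fin L × Fin L,
        (1 / ∏ j, π (W j)) * ((∏ s, π (ω s).1 * M (ω s).1 (ω s).2) *
          (((if ∀ j : Fin k, (ω ⟨i.1 + j.1, by have := i.2; have := j.2; omega⟩).1 = W j
              then 1 else 0) -
            (if ∀ j : Fin k, (ω ⟨i.1 + j.1, by have := i.2; have := j.2; omega⟩).2 = W j
              then 1 else 0)) *
           ((if ∀ j : Fin k, (ω ⟨i'.1 + j.1, by have := i'.2; have := j.2; omega⟩).1 = W j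
              then 1 else 0) -
            (if ∀ j : Fin k, (ω ⟨i'.1 + j.1, by have := i'.2; have := j.2; omega⟩).2 = W j
              then 1 else 0)))))
      = if i = i' then 2 * (L : ℝ) ^ k - 2 * (∑ w, M w w) ^ k else 0 := by
    intro i i' hii
    have e1 :
        ∑ W : Fin k → Fin L, (1 / ∏ j, π (W j)) *
          (∑ ω : Fin n → Fin L × Fin L, (∏ s, π (ω s).1 * M (ω s).1 (ω s).2) *
            ((if ∀ j : Fin k, (ω ⟨i.1 + j.1, by have := i.2; have := j.2; omega⟩).1 = W j
                then 1 else 0) *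
             (if ∀ j : Fin k, (ω ⟨i'.1 + j.1, by have := i'.2; have := j.2; omega⟩).1 = W j
                then 1 else 0)))
        = if i = i' then (L : ℝ) ^ k else 1 := by
      have h := main_pair hk hkn M π hπ0 hπ1 h00 (fun x => x.1) (fun x => x.1) 1
        hfst hfst h11FF hΔrow i i' hii
      rw [hΔdiag] at h
      exact h
    have e2 :
        ∑ W : Fin k → Fin L, (1 / ∏ j, π (W j)) *
          (∑ ω : Fin n → Fin L × Fin L, (∏ s, π (ω s).1 * M (ω s).1 (ω s).2) *
            ((if ∀ j : Fin k, (ω ⟨i.1 + j.1, by have := i.2; have := j.2; omega⟩).1 = W j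
                then 1 else 0) *
             (if ∀ j : Fin k, (ω ⟨i'.1 + j.1, by have := i'.2; have := j.2; omega⟩).2 = W j
                then 1 else 0)))
        = if i = i' then (∑ w, M w w) ^ k else 1 :=
      main_pair hk hkn M π hπ0 hπ1 h00 (fun x => x.1) (fun x => x.2) M
        hfst hsnd h11FS hM1 i i' hii
    have e3 :
        ∑ W : Fin k → Fin L, (1 / ∏ j, π (W j)) *
          (∑ ω : Fin n → Fin L × Fin L, (∏ s, π (ω s).1 * M (ω s).1 (ω s).2) *
            ((if ∀ j : Fin k, (ω ⟨i.1 + j.1, by have := i.2; have := j.2; omega⟩).2 = W j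
                then 1 else 0) *
             (if ∀ j : Fin k, (ω ⟨i'.1 + j.1, by have := i'.2; have := j.2; omega⟩).1 = W j
                then 1 else 0)))
        = if i = i' then (∑ w, M w w) ^ k else 1 := by
      have h := main_pair hk hkn M π hπ0 hπ1 h00 (fun x => x.2) (fun x => x.1)
        (Matrix.of fun a b : Fin L => π b * M b a / π a)
        hsnd hfst h11SF hNrow i i' hii
      rw [hNdiag] at h
      exact h
    have e4 :
        ∑ W : Fin k → Fin L, (1 / ∏ j, π (W j)) *
          (∑ ω : Fin n → Fin L × Fin L, (∏ s, π (ω s).1 * M (ω s).1 (ω s).2) *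
            ((if ∀ j : Fin k, (ω ⟨i.1 + j.1, by have := i.2; have := j.2; omega⟩).2 = W j
                then 1 else 0) *
             (if ∀ j : Fin k, (ω ⟨i'.1 + j.1, by have := i'.2; have := j.2; omega⟩).2 = W j
                then 1 else 0)))
        = if i = i' then (L : ℝ) ^ k else 1 := by
      have h := main_pair hk hkn M π hπ0 hπ1 h00 (fun x => x.2) (fun x => x.2) 1
        hsnd hsnd h11SS hΔrow i i' hii
      rw [hΔdiag] at h
      exact h
    calc
      (∑ W : Fin k → Fin L, ∑ ω : Fin n → Fin L × Fin L,
        (1 / ∏ j, π (W j)) * ((∏ s, π (ω s).1 * M (ω s).1 (ω s).2) *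
          (((if ∀ j : Fin k, (ω ⟨i.1 + j.1, by have := i.2; have := j.2; omega⟩).1 = W j
              then 1 else 0) -
            (if ∀ j : Fin k, (ω ⟨i.1 + j.1, by have := i.2; have := j.2; omega⟩).2 = W j
              then 1 else 0)) *
           ((if ∀ j : Fin k, (ω ⟨i'.1 + j.1, by have := i'.2; have := j.2; omega⟩).1 = W j
              then 1 else 0) -
            (if ∀ j : Fin k, (ω ⟨i'.1 + j.1, by have := i'.2; have := j.2; omega⟩).2 = W j
              then 1 else 0)))))
          = ∑ W : Fin k → Fin L, ∑ ω : Fin n → Fin L × Fin L,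
            ((1 / ∏ j, π (W j)) * ((∏ s, π (ω s).1 * M (ω s).1 (ω s).2) *
              ((if ∀ j : Fin k, (ω ⟨i.1 + j.1, by have := i.2; have := j.2; omega⟩).1 = W j
                  then 1 else 0) *
               (if ∀ j : Fin k, (ω ⟨i'.1 + j.1, by have := i'.2; have := j.2; omega⟩).1 = W j
                  then 1 else 0)))
            - (1 / ∏ j, π (W j)) * ((∏ s, π (ω s).1 * M (ω s).1 (ω s).2) *
              ((if ∀ j : Fin k, (ω ⟨i.1 + j.1, by have := i.2; have := j.2; omega⟩).1 = W j
                  then 1 else 0) *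
               (if ∀ j : Fin k, (ω ⟨i'.1 + j.1, by have := i'.2; have := j.2; omega⟩).2 = W j
                  then 1 else 0)))
            - (1 / ∏ j, π (W j)) * ((∏ s, π (ω s).1 * M (ω s).1 (ω s).2) *
              ((if ∀ j : Fin k, (ω ⟨i.1 + j.1, by have := i.2; have := j.2; omega⟩).2 = W j
                  then 1 else 0) *
               (if ∀ j : Fin k, (ω ⟨i'.1 + j.1, by have := i'.2; have := j.2; omega⟩).1 = W j
                  then 1 else 0)))
            + (1 / ∏ j, π (W j)) * ((∏ s, π (ω s).1 * M (ω s).1 (ω s).2) *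
              ((if ∀ j : Fin k, (ω ⟨i.1 + j.1, by have := i.2; have := j.2; omega⟩).2 = W j
                  then 1 else 0) *
               (if ∀ j : Fin k, (ω ⟨i'.1 + j.1, by have := i'.2; have := j.2; omega⟩).2 = W j
                  then 1 else 0)))) :=
        Finset.sum_congr rfl fun W _ => Finset.sum_congr rfl fun ω _ => by ring
      _ = (if i = i' then (L : ℝ) ^ k else 1) - (if i = i' then (∑ w, M w w) ^ k else 1)
          - (if i = i' then (∑ w, M w w) ^ k else 1) + (if i = i' then (L : ℝ) ^ k else 1) := by
        simp only [Finset.sum_add_distrib, Finset.sum_sub_distrib, ← Finset.mul_sum]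
        rw [e1, e2, e3, e4]
      _ = if i = i' then 2 * (L : ℝ) ^ k - 2 * (∑ w, M w w) ^ k else 0 := by
        by_cases he : i = i' <;> simp [he] <;> ring
  have pairval : ∀ i i' : Fin (n - k + 1),
      (∑ W : Fin k → Fin L, ∑ ω : Fin n → Fin L × Fin L,
        (1 / ∏ j, π (W j)) * ((∏ s, π (ω s).1 * M (ω s).1 (ω s).2) *
          (((if ∀ j : Fin k, (ω ⟨i.1 + j.1, by have := i.2; have := j.2; omega⟩).1 = W j
              then 1 else 0) -
            (if ∀ j : Fin k, (ω ⟨i.1 + j.1, by have := i.2; have := j.2; omega⟩).2 = W j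
              then 1 else 0)) *
           ((if ∀ j : Fin k, (ω ⟨i'.1 + j.1, by have := i'.2; have := j.2; omega⟩).1 = W j
              then 1 else 0) -
            (if ∀ j : Fin k, (ω ⟨i'.1 + j.1, by have := i'.2; have := j.2; omega⟩).2 = W j
              then 1 else 0)))))
      = if i = i' then 2 * (L : ℝ) ^ k - 2 * (∑ w, M w w) ^ k else 0 := by
    intro i i'
    rcases le_or_gt i.1 i'.1 with h | h
    · exact pairhalf i i' h
    · have key := pairhalf i' i (le_of_lt h)
      have swap : (∑ W : Fin k → Fin L, ∑ ω : Fin n → Fin L × Fin L,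
        (1 / ∏ j, π (W j)) * ((∏ s, π (ω s).1 * M (ω s).1 (ω s).2) *
          (((if ∀ j : Fin k, (ω ⟨i.1 + j.1, by have := i.2; have := j.2; omega⟩).1 = W j
              then 1 else 0) -
            (if ∀ j : Fin k, (ω ⟨i.1 + j.1, by have := i.2; have := j.2; omega⟩).2 = W j
              then 1 else 0)) *
           ((if ∀ j : Fin k, (ω ⟨i'.1 + j.1, by have := i'.2; have := j.2; omega⟩).1 = W j
              then 1 else 0) -
            (if ∀ j : Fin k, (ω ⟨i'.1 + j.1, by have := i'.2; have := j.2; omega⟩).2 = W j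
              then 1 else 0)))))
          = (∑ W : Fin k → Fin L, ∑ ω : Fin n → Fin L × Fin L,
        (1 / ∏ j, π (W j)) * ((∏ s, π (ω s).1 * M (ω s).1 (ω s).2) *
          (((if ∀ j : Fin k, (ω ⟨i'.1 + j.1, by have := i'.2; have := j.2; omega⟩).1 = W j
              then 1 else 0) -
            (if ∀ j : Fin k, (ω ⟨i'.1 + j.1, by have := i'.2; have := j.2; omega⟩).2 = W j
              then 1 else 0)) *
           ((if ∀ j : Fin k, (ω ⟨i.1 + j.1, by have := i.2; have := j.2; omega⟩).1 = W j
              then 1 else 0) -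
            (if ∀ j : Fin k, (ω ⟨i.1 + j.1, by have := i.2; have := j.2; omega⟩).2 = W j
              then 1 else 0))))) :=
        Finset.sum_congr rfl fun W _ => Finset.sum_congr rfl fun ω _ => by ring
      rw [swap, key]
      by_cases he : i = i'
      · rw [if_pos he, if_pos he.symm]
      · rw [if_neg he, if_neg (fun e => he e.symm)]
  have expand1 : ∀ ω : Fin n → Fin L × Fin L,
      prob ω * (∑ W : Fin k → Fin L, (1 / ∏ j, π (W j)) * (X₁ W ω - X₂ W ω) ^ 2)
      = ∑ W : Fin k → Fin L, ∑ i : Fin (n - k + 1), ∑ i' : Fin (n - k + 1),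
        (1 / ∏ j, π (W j)) * ((∏ s, π (ω s).1 * M (ω s).1 (ω s).2) *
          (((if ∀ j : Fin k, (ω ⟨i.1 + j.1, by have := i.2; have := j.2; omega⟩).1 = W j
              then 1 else 0) -
            (if ∀ j : Fin k, (ω ⟨i.1 + j.1, by have := i.2; have := j.2; omega⟩).2 = W j
              then 1 else 0)) *
           ((if ∀ j : Fin k, (ω ⟨i'.1 + j.1, by have := i'.2; have := j.2; omega⟩).1 = W j
              then 1 else 0) -
            (if ∀ j : Fin k, (ω ⟨i'.1 + j.1, by have := i'.2; have := j.2; omega⟩).2 = W j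
              then 1 else 0)))) := by
    intro ω
    rw [hprob, Finset.mul_sum]
    refine Finset.sum_congr rfl fun W _ => ?_
    rw [hX₁, hX₂, ← Finset.sum_sub_distrib, sq, Finset.sum_mul_sum]
    simp only [Finset.mul_sum]
    refine Finset.sum_congr rfl fun i _ => Finset.sum_congr rfl fun i' _ => by ring
  calc E (fun ω => ∑ W : Fin k → Fin L,
        (1 / ∏ j, π (W j)) * (X₁ W ω - X₂ W ω) ^ 2)
      = ∑ ω : Fin n → Fin L × Fin L, prob ω * (∑ W : Fin k → Fin L,
          (1 / ∏ j, π (W j)) * (X₁ W ω - X₂ W ω) ^ 2) := hE _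
    _ = ∑ ω : Fin n → Fin L × Fin L, ∑ W : Fin k → Fin L,
          ∑ i : Fin (n - k + 1), ∑ i' : Fin (n - k + 1),
        (1 / ∏ j, π (W j)) * ((∏ s, π (ω s).1 * M (ω s).1 (ω s).2) *
          (((if ∀ j : Fin k, (ω ⟨i.1 + j.1, by have := i.2; have := j.2; omega⟩).1 = W j
              then 1 else 0) -
            (if ∀ j : Fin k, (ω ⟨i.1 + j.1, by have := i.2; have := j.2; omega⟩).2 = W j
              then 1 else 0)) *
           ((if ∀ j : Fin k, (ω ⟨i'.1 + j.1, by have := i'.2; have := j.2; omega⟩).1 = W j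
              then 1 else 0) -
            (if ∀ j : Fin k, (ω ⟨i'.1 + j.1, by have := i'.2; have := j.2; omega⟩).2 = W j
              then 1 else 0)))) :=
      Finset.sum_congr rfl fun ω _ => expand1 ω
    _ = ∑ i : Fin (n - k + 1), ∑ i' : Fin (n - k + 1),
        ∑ W : Fin k → Fin L, ∑ ω : Fin n → Fin L × Fin L,
        (1 / ∏ j, π (W j)) * ((∏ s, π (ω s).1 * M (ω s).1 (ω s).2) *
          (((if ∀ j : Fin k, (ω ⟨i.1 + j.1, by have := i.2; have := j.2; omega⟩).1 = W j
              then 1 else 0) -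
            (if ∀ j : Fin k, (ω ⟨i.1 + j.1, by have := i.2; have := j.2; omega⟩).2 = W j
              then 1 else 0)) *
           ((if ∀ j : Fin k, (ω ⟨i'.1 + j.1, by have := i'.2; have := j.2; omega⟩).1 = W j
              then 1 else 0) -
            (if ∀ j : Fin k, (ω ⟨i'.1 + j.1, by have := i'.2; have := j.2; omega⟩).2 = W j
              then 1 else 0)))) :=
      sum4_reorder _
    _ = ∑ i : Fin (n - k + 1), ∑ i' : Fin (n - k + 1),
        (if i = i' then 2 * (L : ℝ) ^ k - 2 * (∑ w, M w w) ^ k else 0) :=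
      Finset.sum_congr rfl fun i _ => Finset.sum_congr rfl fun i' _ => pairval i i'
    _ = ∑ _i : Fin (n - k + 1), (2 * (L : ℝ) ^ k - 2 * (∑ w, M w w) ^ k) :=
      Finset.sum_congr rfl fun i _ => by rw [Finset.sum_ite_eq]; simp
    _ = ((n - k + 1 : ℕ) : ℝ) * (2 * (L : ℝ) ^ k - 2 * (∑ w, M w w) ^ k) := by
      rw [Finset.sum_const, Finset.card_univ, Fintype.card_fin, nsmul_eq_mul]
    _ = 2 * ((n - k + 1 : ℕ) : ℝ) * ((L : ℝ) ^ k - (Matrix.trace M) ^ k) := by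
      have htr : Matrix.trace M = ∑ w, M w w := rfl
      rw [htr]; ring
end

section
/- Under the stationary two-sequence k-mer model with L = 4, transition matrix M = exp(tQ) for the Jukes–Cantor rate matrix Q and branch length t ≥ 0, and uniform stationary vector π, set d = E[ ∑_{W ∈ [4]^k} (X₁^W − X₂^W)² ] (the expected squared Euclidean distance between the k-mer count vectors). Then t = −(3/4)·ln( (4/3)·(1 − d/(2(n−k+1)))^{1/k} − 1/3 ). -/
/-!
Expanding the square, `d` is the sum over pairs of window positions `(i, i')` of the expectation
of `[x_i = x_i'] - [x_i = y_i'] - [y_i = x_i'] + [y_i = y_i']`, where `x_i`, `y_i` are the k-mers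
of the two sequences at `i`. For `i ≠ i'`, each letter of the later window sits at a site not
yet looked at, and that letter is uniform whatever the earlier ones were, so each of the four
terms has expectation `4⁻ᵏ` and they cancel. For `i = i'` the diagonal terms are `1` and the
cross terms are `p ^ k`, where `p = (1 + 3 e^{-4t/3}) / 4` is the probability that the two
sequences agree at a site, read off from `M = exp (tQ)` by diagonalizing `Q`. Hence `d = 2 (n - k + 1) (1 - p ^ k)`, and solving for `t` gives the correction formula.
-/

open Finset Function

section IidExpect

variable {ι α : Type*} [Fintype ι] [DecidableEq ι] (f : α → ℝ)

theorem prod_comp_update_mul (ω : ι → α) (q : ι) (v : α) :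
    (∏ c, f (update ω q v c)) * f (ω q) = (∏ c, f (ω c)) * f v := by
  rw [Fintype.prod_eq_mul_prod_compl q, Fintype.prod_eq_mul_prod_compl q (fun c => f (ω c))]
  simp only [update_self]
  rw [prod_congr rfl fun c hc => by rw [update_of_ne (by simpa using hc)]]
  ring

variable [Fintype α]

noncomputable def iidExpect (φ : (ι → α) → ℝ) : ℝ :=
  ∑ ω, (∏ c, f (ω c)) * φ ω

theorem iidExpect_one (hf : ∑ v, f v = 1) : iidExpect (ι := ι) f (fun _ => 1) = 1 := by
  simp [iidExpect, ← Fintype.prod_sum, hf]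

theorem iidExpect_sum {κ : Type*} (s : Finset κ) (φ : κ → (ι → α) → ℝ) :
    iidExpect f (fun ω => ∑ i ∈ s, φ i ω) = ∑ i ∈ s, iidExpect f (φ i) := by
  simp only [iidExpect, mul_sum]
  exact sum_comm

theorem iidExpect_add (φ ψ : (ι → α) → ℝ) :
    iidExpect f (fun ω => φ ω + ψ ω) = iidExpect f φ + iidExpect f ψ := by
  simp only [iidExpect, mul_add, sum_add_distrib]

theorem iidExpect_sub (φ ψ : (ι → α) → ℝ) :
    iidExpect f (fun ω => φ ω - ψ ω) = iidExpect f φ - iidExpect f ψ := by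
  simp only [iidExpect, mul_sub, sum_sub_distrib]

theorem iidExpect_mul_const (φ : (ι → α) → ℝ) (c : ℝ) :
    iidExpect f (fun ω => φ ω * c) = iidExpect f φ * c := by
  simp only [iidExpect, sum_mul, mul_assoc]

/-- Resampling one site: the involution `(ω, v) ↦ (update ω q v, ω q)` preserves the weight
`(∏ c, f (ω c)) * f v`. -/
theorem iidExpect_eq_iidExpect_sum_update (hf : ∑ v, f v = 1) (q : ι)
    (φ : (ι → α) → ℝ) :
    iidExpect f φ = iidExpect f fun ω => ∑ v, f v * φ (update ω q v) := by
  let σ : (ι → α) × α → (ι → α) × α := fun p => (update p.1 q p.2, p.1 q)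
  have hσ : Involutive σ := fun p => by simp [σ]
  have hswap := Fintype.sum_equiv (hσ.toPerm σ)
    (fun p => (∏ c, f (p.1 c)) * f p.2 * φ (update p.1 q p.2))
    (fun p => (∏ c, f (p.1 c)) * f p.2 * φ p.1)
    fun p => by simp [σ, prod_comp_update_mul]
  simp only [Fintype.sum_prod_type, ← sum_mul, ← mul_sum, hf, mul_one] at hswap
  simp only [iidExpect, mul_sum, ← hswap, mul_assoc]

/-- The site `b j` is fresh for the first `j + 1` factors; averaging out the site of the last
factor therefore contributes a factor `c` and leaves the same situation with one factor less. -/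
theorem iidExpect_prod_fresh (hf : ∑ v, f v = 1) (c : ℝ) {m : ℕ} (b : Fin m → ι)
    (Φ : Fin m → (ι → α) → α → ℝ) (hb : Injective b)
    (hΦ : ∀ j j', j' ≤ j → ∀ ω v, Φ j' (update ω (b j) v) = Φ j' ω)
    (hc : ∀ j ω, ∑ v, f v * Φ j ω v = c) :
    iidExpect f (fun ω => ∏ j, Φ j ω (ω (b j))) = c ^ m := by
  induction m with
  | zero => simpa using iidExpect_one f hf
  | succ m ih =>
    let F ω := ∏ j : Fin m, Φ j.castSucc ω (ω (b j.castSucc))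
    have hresample : ∀ ω, ∑ v, f v * ∏ j, Φ j (update ω (b (Fin.last m)) v)
        (update ω (b (Fin.last m)) v (b j)) = F ω * c := fun ω => by
      have hF : ∀ v, ∏ j : Fin m, Φ j.castSucc (update ω (b (Fin.last m)) v)
          (update ω (b (Fin.last m)) v (b j.castSucc)) = F ω := fun v =>
        prod_congr rfl fun j _ => by
          rw [hΦ _ _ (Fin.le_last _), update_of_ne (hb.ne (Fin.castSucc_lt_last j).ne)]
      simp only [Fin.prod_univ_castSucc, hF, update_self, hΦ _ _ le_rfl, mul_left_comm (f _),
        ← mul_sum, hc]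
    rw [iidExpect_eq_iidExpect_sum_update f hf (b (Fin.last m)), funext hresample,
      iidExpect_mul_const, pow_succ]
    exact congrArg (· * c) <| ih (b ∘ Fin.castSucc) _ (hb.comp (Fin.castSucc_injective m))
      (fun j j' h => hΦ j.castSucc j'.castSucc h) (fun j => hc _)

end IidExpect

theorem sum_sq_sum_indicator_sub_sum_indicator {κ ν : Type*} [Fintype κ] [DecidableEq κ]
    [Fintype ν] (x y : ν → κ) :
    ∑ W, ((∑ i, if x i = W then (1 : ℝ) else 0) - ∑ i, if y i = W then 1 else 0) ^ 2 =
      ∑ i, ∑ i', ((if x i = x i' then (1 : ℝ) else 0) - (if x i = y i' then 1 else 0) -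
        (if y i = x i' then 1 else 0) + if y i = y i' then 1 else 0) := by
  have hpair : ∀ a b : κ, ∑ W, (if a = W then (1 : ℝ) else 0) * (if b = W then 1 else 0) =
      if a = b then 1 else 0 := fun a b => by
    simp only [mul_ite, mul_one, mul_zero, sum_ite_eq, mem_univ, if_true]
  simp only [sq, sum_mul_sum, ← sum_sub_distrib, sub_mul, mul_sub]
  rw [sum_comm]
  refine sum_congr rfl fun i _ => ?_
  rw [sum_comm]
  refine sum_congr rfl fun i' _ => ?_
  simp only [sum_sub_distrib, hpair]
  ring

section Kmer

variable {α S : Type*} [DecidableEq S] {n k : ℕ} (hkn : k ≤ n)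

def window (i : Fin (n - k + 1)) (j : Fin k) : Fin n := ⟨i + j, by omega⟩

def kmer (g : α → S) (ω : Fin n → α) (i : Fin (n - k + 1)) : Fin k → S :=
  fun j => g (ω (window hkn i j))

noncomputable def kmerCount (g : α → S) (W : Fin k → S) (ω : Fin n → α) : ℝ :=
  ∑ i, if kmer hkn g ω i = W then 1 else 0

theorem window_injective (i : Fin (n - k + 1)) : Injective (window hkn i) :=
  fun j j' h => Fin.ext (by simpa [window] using congrArg Fin.val h)

theorem window_ne_window_of_lt {i i' : Fin (n - k + 1)} (h : i < i') {j j' : Fin k}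
    (hj : j' ≤ j) : window hkn i j' ≠ window hkn i' j := by
  simp only [window, ne_eq, Fin.mk.injEq]
  omega

theorem indicator_kmer_eq_kmer (g g' : α → S) (ω : Fin n → α) (i i' : Fin (n - k + 1)) :
    (if kmer hkn g ω i = kmer hkn g' ω i' then (1 : ℝ) else 0) =
      ∏ j, if g (ω (window hkn i j)) = g' (ω (window hkn i' j)) then 1 else 0 := by
  simp [prod_boole, kmer, funext_iff]

variable [Fintype α] (f : α → ℝ) (hf : ∑ v, f v = 1)
include hf

theorem iidExpect_kmer_eq_kmer_self (g g' : α → S) (i : Fin (n - k + 1)) :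
    iidExpect f (fun ω => if kmer hkn g ω i = kmer hkn g' ω i then 1 else 0) =
      (∑ v, f v * if g v = g' v then 1 else 0) ^ k := by
  simp only [indicator_kmer_eq_kmer]
  exact iidExpect_prod_fresh f hf _ (window hkn i) (fun _ _ v => if g v = g' v then 1 else 0)
    (window_injective hkn i) (fun _ _ _ _ _ => rfl) fun _ _ => rfl

theorem iidExpect_kmer_eq_kmer_of_lt (g g' : α → S) (c : ℝ)
    (hg' : ∀ x, ∑ v, f v * (if x = g' v then 1 else 0) = c)
    {i i' : Fin (n - k + 1)} (h : i < i') :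
    iidExpect f (fun ω => if kmer hkn g ω i = kmer hkn g' ω i' then 1 else 0) = c ^ k := by
  simp only [indicator_kmer_eq_kmer]
  exact iidExpect_prod_fresh f hf c (window hkn i')
    (fun j ω v => if g (ω (window hkn i j)) = g' v then 1 else 0) (window_injective hkn i')
    (fun j j' hj ω v => by rw [update_of_ne (window_ne_window_of_lt hkn h hj)])
    fun _ ω => hg' _

theorem iidExpect_kmer_eq_kmer_of_ne (g g' : α → S) (c : ℝ)
    (hg : ∀ x, ∑ v, f v * (if x = g v then 1 else 0) = c)
    (hg' : ∀ x, ∑ v, f v * (if x = g' v then 1 else 0) = c)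
    {i i' : Fin (n - k + 1)} (h : i ≠ i') :
    iidExpect f (fun ω => if kmer hkn g ω i = kmer hkn g' ω i' then 1 else 0) = c ^ k := by
  rcases h.lt_or_gt with h | h
  · exact iidExpect_kmer_eq_kmer_of_lt hkn f hf g g' c hg' h
  · simp only [eq_comm (a := kmer hkn g _ i)]
    exact iidExpect_kmer_eq_kmer_of_lt hkn f hf g' g c hg h

theorem iidExpect_sum_sq_kmerCount_sub [Fintype S] (g₁ g₂ : α → S) (c : ℝ)
    (hg₁ : ∀ x, ∑ v, f v * (if x = g₁ v then 1 else 0) = c)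
    (hg₂ : ∀ x, ∑ v, f v * (if x = g₂ v then 1 else 0) = c) :
    iidExpect f (fun ω => ∑ W, (kmerCount hkn g₁ W ω - kmerCount hkn g₂ W ω) ^ 2) =
      (n - k + 1 : ℕ) * (2 - 2 * (∑ v, f v * if g₁ v = g₂ v then 1 else 0) ^ k) := by
  have hterm : ∀ i i', iidExpect f (fun ω =>
      (if kmer hkn g₁ ω i = kmer hkn g₁ ω i' then (1 : ℝ) else 0) -
        (if kmer hkn g₁ ω i = kmer hkn g₂ ω i' then 1 else 0) -
        (if kmer hkn g₂ ω i = kmer hkn g₁ ω i' then 1 else 0) +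
        if kmer hkn g₂ ω i = kmer hkn g₂ ω i' then 1 else 0) =
      if i = i' then 2 - 2 * (∑ v, f v * if g₁ v = g₂ v then 1 else 0) ^ k else 0 := by
    intro i i'
    simp only [iidExpect_add, iidExpect_sub]
    split_ifs with h
    · subst h
      simp only [eq_comm (a := kmer hkn g₂ _ i), iidExpect_kmer_eq_kmer_self hkn f hf, eq_self,
        if_true, iidExpect_one f hf]
      ring
    · simp only [iidExpect_kmer_eq_kmer_of_ne hkn f hf _ _ c hg₁ hg₂ h,
        iidExpect_kmer_eq_kmer_of_ne hkn f hf _ _ c hg₁ hg₁ h,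
        iidExpect_kmer_eq_kmer_of_ne hkn f hf _ _ c hg₂ hg₁ h,
        iidExpect_kmer_eq_kmer_of_ne hkn f hf _ _ c hg₂ hg₂ h]
      ring
  simp only [kmerCount, sum_sq_sum_indicator_sub_sum_indicator, iidExpect_sum, hterm, sum_ite_eq,
    mem_univ, if_true, sum_const, card_univ, Fintype.card_fin, nsmul_eq_mul]

end Kmer

section JukesCantor

open Matrix

noncomputable def jcMatrix (a : ℝ) : Matrix (Fin 4) (Fin 4) ℝ :=
  of fun i j => if i = j then (1 + 3 * a) / 4 else (1 - a) / 4

/-- The columns are eigenvectors of the Jukes–Cantor rate matrix: the all-ones vector for the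
eigenvalue `0` and three orthogonal `±1` vectors for the eigenvalue `-4/3`. -/
noncomputable def jcEigenbasis : Matrix (Fin 4) (Fin 4) ℝ :=
  !![1, 1, 1, 1; 1, 1, -1, -1; 1, -1, 1, -1; 1, -1, -1, 1]

theorem jcEigenbasis_mul_self : jcEigenbasis * jcEigenbasis = (4 : ℝ) • 1 := by
  ext i j
  fin_cases i <;> fin_cases j <;> simp [jcEigenbasis, mul_apply, Fin.sum_univ_four] <;> norm_num

noncomputable def jcEigenbasisUnit : (Matrix (Fin 4) (Fin 4) ℝ)ˣ where
  val := jcEigenbasis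
  inv := (1 / 4 : ℝ) • jcEigenbasis
  val_inv := by rw [mul_smul_comm, jcEigenbasis_mul_self, smul_smul]; norm_num
  inv_val := by rw [smul_mul_assoc, jcEigenbasis_mul_self, smul_smul]; norm_num

theorem exp_smul_jukesCantor (t : ℝ) :
    NormedSpace.exp (t • of fun i j : Fin 4 => if i = j then (-1 : ℝ) else 1 / 3) =
      jcMatrix (Real.exp (-(4 * t) / 3)) := by
  have hdiag : t • (of fun i j : Fin 4 => if i = j then (-1 : ℝ) else 1 / 3) =
      jcEigenbasisUnit * diagonal ![0, -(4 * t) / 3, -(4 * t) / 3, -(4 * t) / 3] *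
        (↑jcEigenbasisUnit⁻¹ : Matrix (Fin 4) (Fin 4) ℝ) := by
    ext i j
    fin_cases i <;> fin_cases j <;>
      simp only [mul_apply, Fin.sum_univ_four] <;> simp [jcEigenbasisUnit, jcEigenbasis] <;> ring
  have hexp : NormedSpace.exp ![(0 : ℝ), -(4 * t) / 3, -(4 * t) / 3, -(4 * t) / 3] =
      ![1, Real.exp (-(4 * t) / 3), Real.exp (-(4 * t) / 3), Real.exp (-(4 * t) / 3)] := by
    ext i
    fin_cases i <;> simp [Pi.coe_exp, ← Real.exp_eq_exp_ℝ]
  rw [hdiag, exp_units_conj, exp_diagonal, hexp]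
  ext i j
  fin_cases i <;> fin_cases j <;> simp only [mul_apply, Fin.sum_univ_four] <;>
    simp [jcEigenbasisUnit, jcEigenbasis, jcMatrix] <;> ring

variable (a : ℝ)

theorem sum_jcMatrix_weight : ∑ v : Fin 4 × Fin 4, 1 / 4 * jcMatrix a v.1 v.2 = 1 := by
  simp [jcMatrix, Fintype.sum_prod_type, Fin.sum_univ_four]
  ring

theorem jcMatrix_weight_fst_marginal (x : Fin 4) :
    ∑ v : Fin 4 × Fin 4, 1 / 4 * jcMatrix a v.1 v.2 * (if x = v.1 then 1 else 0) = 1 / 4 := by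
  fin_cases x <;> simp [jcMatrix, Fintype.sum_prod_type, Fin.sum_univ_four] <;> ring

theorem jcMatrix_weight_snd_marginal (x : Fin 4) :
    ∑ v : Fin 4 × Fin 4, 1 / 4 * jcMatrix a v.1 v.2 * (if x = v.2 then 1 else 0) = 1 / 4 := by
  fin_cases x <;> simp [jcMatrix, Fintype.sum_prod_type, Fin.sum_univ_four] <;> ring

theorem jcMatrix_weight_diag :
    ∑ v : Fin 4 × Fin 4, 1 / 4 * jcMatrix a v.1 v.2 * (if v.1 = v.2 then 1 else 0) =
      (1 + 3 * a) / 4 := by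
  simp [jcMatrix, Fintype.sum_prod_type]

end JukesCantor

theorem jukes_cantor_kmer_distance_correction
    (k n : ℕ) (hk : 1 ≤ k) (hkn : k ≤ n)
    (t : ℝ)
    (Q : Matrix (Fin 4) (Fin 4) ℝ)
    (hQ : Q = Matrix.of fun i j => if i = j then (-1 : ℝ) else 1 / 3)
    (M : Matrix (Fin 4) (Fin 4) ℝ)
    (hM : M = NormedSpace.exp (t • Q))
    (prob : (Fin n → Fin 4 × Fin 4) → ℝ)
    (hprob : ∀ ω, prob ω = ∏ i, (1 / 4 : ℝ) * M (ω i).1 (ω i).2)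
    (E : ((Fin n → Fin 4 × Fin 4) → ℝ) → ℝ)
    (hE : ∀ f, E f = ∑ ω, prob ω * f ω)
    (X₁ X₂ : (Fin k → Fin 4) → (Fin n → Fin 4 × Fin 4) → ℝ)
    (hX₁ : ∀ W ω, X₁ W ω = ∑ i : Fin (n - k + 1),
      if ∀ j : Fin k, (ω ⟨i.1 + j.1, by have := i.2; have := j.2; omega⟩).1 = W j
        then 1 else 0)
    (hX₂ : ∀ W ω, X₂ W ω = ∑ i : Fin (n - k + 1),
      if ∀ j : Fin k, (ω ⟨i.1 + j.1, by have := i.2; have := j.2; omega⟩).2 = W j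
        then 1 else 0)
    (d : ℝ)
    (hd : d = E (fun ω => ∑ W : Fin k → Fin 4, (X₁ W ω - X₂ W ω) ^ 2)) :
    t = -(3 / 4) * Real.log
        ((4 / 3) * (1 - d / (2 * ((n - k + 1 : ℕ) : ℝ))) ^ ((1 : ℝ) / k) - 1 / 3) := by
  have hkmer : ∀ (g : Fin 4 × Fin 4 → Fin 4) W ω, (∑ i : Fin (n - k + 1),
      if ∀ j : Fin k, g (ω ⟨i.1 + j.1, by have := i.2; have := j.2; omega⟩) = W j
        then (1 : ℝ) else 0) = kmerCount hkn g W ω := fun g W ω => by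
    simp only [kmerCount, kmer, window, funext_iff]
  have hdist : d =
      ((n - k + 1 : ℕ) : ℝ) * (2 - 2 * ((1 + 3 * Real.exp (-(4 * t) / 3)) / 4) ^ k) := by
    rw [hd, hE, ← jcMatrix_weight_diag, ← iidExpect_sum_sq_kmerCount_sub hkn _
      (sum_jcMatrix_weight _) Prod.fst Prod.snd _ (jcMatrix_weight_fst_marginal _)
      (jcMatrix_weight_snd_marginal _)]
    simp only [iidExpect, hprob, hM, hQ, exp_smul_jukesCantor, hX₁, hX₂, hkmer]
  have hN : (0 : ℝ) < (n - k + 1 : ℕ) := by positivity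
  have hk0 : (k : ℝ) ≠ 0 := by positivity
  have hroot : 1 - d / (2 * ((n - k + 1 : ℕ) : ℝ)) =
      ((1 + 3 * Real.exp (-(4 * t) / 3)) / 4) ^ k := by
    rw [hdist]
    field_simp
    ring
  rw [hroot, ← Real.rpow_natCast, ← Real.rpow_mul (by positivity), mul_one_div_cancel hk0,
    Real.rpow_one, show ∀ x : ℝ, 4 / 3 * ((1 + 3 * x) / 4) - 1 / 3 = x by intro; ring,
    Real.log_exp]
  ring
end

section
/- Under the (not necessarily stationary) two-sequence 1-mer model, for every w ∈ [L] one has π₁(w) = (1/n)·E[X₁^w] and π₂(w) = (1/n)·E[X₂^w], and for all w, u ∈ [L] the joint single-site probability satisfies P(w,u) = (1/2)·( π₁(w) + π₂(u) − (π₁(w)·π₂(u)/n)·E[ ( X₁^w/π₁(w) − X₂^u/π₂(u) )² ] ). -/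
/-!
Under the product weight `ω ↦ ∏ k, q (ω k)` with `∑ q = 1` distinct coordinates are independent,
so an additive statistic `∑ i, f (ω i)` has mean `n · E_q f` and, when `E_q f = 0`, second moment
`n · E_q f²`. For the centred site variable `f x = 1{x.1 = w}/π₁ w - 1{x.2 = u}/π₂ u`, idempotence of
indicators gives `E_q f² = 1/π₁ w + 1/π₂ u - 2 P w u/(π₁ w π₂ u)`, which is solved for `P w u`.
-/

open Finset

section ProductWeight

variable {ι S : Type*} [Fintype ι] [DecidableEq ι] [Fintype S]

theorem sum_prod_mul_prod_apply (q : S → ℝ) (g : ι → S → ℝ) :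
    ∑ ω : ι → S, (∏ k, q (ω k)) * ∏ k, g k (ω k) = ∏ k, ∑ x, q x * g k x := by
  simp_rw [Fintype.prod_sum, prod_mul_distrib]

variable {q : S → ℝ}

theorem sum_prod_mul_apply (hq : ∑ x, q x = 1) (f : S → ℝ) (i : ι) :
    ∑ ω : ι → S, (∏ k, q (ω k)) * f (ω i) = ∑ x, q x * f x := by
  have key := sum_prod_mul_prod_apply q fun k x => if k = i then f x else 1
  rw [Fintype.prod_eq_single i fun k hk => by simp [hk, hq]] at key
  simpa using key

theorem sum_prod_mul_apply_mul_apply (hq : ∑ x, q x = 1) (f g : S → ℝ) {i j : ι}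
    (hij : i ≠ j) :
    ∑ ω : ι → S, (∏ k, q (ω k)) * (f (ω i) * g (ω j))
      = (∑ x, q x * f x) * ∑ x, q x * g x := by
  have key := sum_prod_mul_prod_apply q fun k x =>
    if k = i then f x else if k = j then g x else 1
  rw [Fintype.prod_eq_mul i j hij fun k hk => by simp [hk, hq]] at key
  simp only [if_neg hij.symm, ↓reduceIte] at key
  convert key using 3 with ω
  rw [Fintype.prod_eq_mul i j hij fun k hk => by simp [hk]]
  simp [hij.symm]

theorem sum_prod_mul_sum_apply (hq : ∑ x, q x = 1) (f : S → ℝ) :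
    ∑ ω : ι → S, (∏ k, q (ω k)) * ∑ i, f (ω i) = Fintype.card ι * ∑ x, q x * f x := by
  conv_lhs => simp only [mul_sum]
  rw [sum_comm]
  simp only [sum_prod_mul_apply hq, sum_const, card_univ, nsmul_eq_mul]

theorem sum_prod_mul_sq_sum_apply (hq : ∑ x, q x = 1) {f : S → ℝ}
    (hf : ∑ x, q x * f x = 0) :
    ∑ ω : ι → S, (∏ k, q (ω k)) * (∑ i, f (ω i)) ^ 2
      = Fintype.card ι * ∑ x, q x * f x ^ 2 := by
  have hpair : ∀ i j : ι, ∑ ω : ι → S, (∏ k, q (ω k)) * (f (ω i) * f (ω j))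
      = if i = j then ∑ x, q x * f x ^ 2 else 0 := by
    intro i j
    rcases eq_or_ne i j with rfl | hij
    · simp only [if_pos, ← sq]
      exact sum_prod_mul_apply hq (fun x => f x ^ 2) i
    · simpa [hij, hf] using sum_prod_mul_apply_mul_apply hq f f hij
  conv_lhs => simp only [sq, sum_mul_sum]; simp only [mul_sum]
  rw [sum_comm]
  simp_rw [sum_comm (s := univ (α := ι → S)), hpair]
  simp only [sum_ite_eq, mem_univ, if_true, sum_const, card_univ, nsmul_eq_mul]

end ProductWeight

section PairDistribution

variable {α β : Type*} [Fintype α] [Fintype β] (P : α → β → ℝ) (w : α) (u : β)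

theorem sum_uncurry_mul_ite_fst [DecidableEq α] :
    ∑ x : α × β, Function.uncurry P x * (if x.1 = w then 1 else 0) = ∑ u, P w u := by
  rw [Fintype.sum_prod_type]
  simp only [Function.uncurry_apply_pair]
  simp

theorem sum_uncurry_mul_ite_snd [DecidableEq β] :
    ∑ x : α × β, Function.uncurry P x * (if x.2 = u then 1 else 0) = ∑ w, P w u := by
  rw [Fintype.sum_prod_type_right]
  simp only [Function.uncurry_apply_pair]
  simp

theorem sum_uncurry_mul_ite_fst_mul_ite_snd [DecidableEq α] [DecidableEq β] :
    ∑ x : α × β, Function.uncurry P x * ((if x.1 = w then 1 else 0) * (if x.2 = u then 1 else 0))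
      = P w u := by
  simp [Fintype.sum_prod_type]

theorem sum_uncurry_mul_ite_div_sub_ite_div [DecidableEq α] [DecidableEq β] (a b : ℝ) :
    ∑ x : α × β, Function.uncurry P x
        * ((if x.1 = w then 1 else 0) / a - (if x.2 = u then 1 else 0) / b)
      = (∑ v, P w v) / a - (∑ v, P v u) / b := by
  simp_rw [mul_sub, ← mul_div_assoc]
  rw [sum_sub_distrib, ← sum_div, ← sum_div, sum_uncurry_mul_ite_fst, sum_uncurry_mul_ite_snd]

theorem sum_uncurry_mul_sq_ite_div_sub_ite_div [DecidableEq α] [DecidableEq β] (a b : ℝ) :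
    ∑ x : α × β, Function.uncurry P x
        * ((if x.1 = w then 1 else 0) / a - (if x.2 = u then 1 else 0) / b) ^ 2
      = (∑ v, P w v) / a ^ 2 + (∑ v, P v u) / b ^ 2 - 2 * P w u / (a * b) := by
  have hpoint : ∀ x : α × β, Function.uncurry P x
        * ((if x.1 = w then 1 else 0) / a - (if x.2 = u then 1 else 0) / b) ^ 2
      = Function.uncurry P x * (if x.1 = w then 1 else 0) / a ^ 2
        + Function.uncurry P x * (if x.2 = u then 1 else 0) / b ^ 2
        - 2 * (Function.uncurry P x
            * ((if x.1 = w then 1 else 0) * (if x.2 = u then 1 else 0))) / (a * b) := by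
    intro x
    split_ifs <;> ring
  rw [sum_congr rfl fun x _ => hpoint x, sum_sub_distrib, sum_add_distrib, ← sum_div, ← sum_div,
    ← sum_div, ← mul_sum, sum_uncurry_mul_ite_fst, sum_uncurry_mul_ite_snd,
    sum_uncurry_mul_ite_fst_mul_ite_snd]

end PairDistribution

theorem onemer_identifiability_of_joint_distribution_general
    (L n : ℕ) (hn : 1 ≤ n)
    (P : Fin L → Fin L → ℝ)
    (hP1 : ∑ w, ∑ u, P w u = 1)
    (π₁ π₂ : Fin L → ℝ)
    (hπ₁ : ∀ w, π₁ w = ∑ u, P w u)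
    (hπ₂ : ∀ u, π₂ u = ∑ w, P w u)
    (hπ₁pos : ∀ w, 0 < π₁ w)
    (hπ₂pos : ∀ u, 0 < π₂ u)
    (prob : (Fin n → Fin L × Fin L) → ℝ)
    (hprob : ∀ ω, prob ω = ∏ i, P (ω i).1 (ω i).2)
    (E : ((Fin n → Fin L × Fin L) → ℝ) → ℝ)
    (hE : ∀ f, E f = ∑ ω, prob ω * f ω)
    (X₁ X₂ : Fin L → (Fin n → Fin L × Fin L) → ℝ)
    (hX₁ : ∀ w ω, X₁ w ω = ∑ i : Fin n, if (ω i).1 = w then 1 else 0)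
    (hX₂ : ∀ w ω, X₂ w ω = ∑ i : Fin n, if (ω i).2 = w then 1 else 0) :
    (∀ w, π₁ w = (1 / (n : ℝ)) * E (X₁ w))
    ∧ (∀ u, π₂ u = (1 / (n : ℝ)) * E (X₂ u))
    ∧ (∀ w u, P w u = (1 / 2) * (π₁ w + π₂ u
        - (π₁ w * π₂ u / (n : ℝ)) *
          E (fun ω => (X₁ w ω / π₁ w - X₂ u ω / π₂ u) ^ 2))) := by
  have hn₀ : (n : ℝ) ≠ 0 := Nat.cast_ne_zero.mpr (by omega)
  have hq : ∑ x, Function.uncurry P x = 1 := by rwa [Fintype.sum_prod_type]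
  have hE' : ∀ f, E f = ∑ ω, (∏ k, Function.uncurry P (ω k)) * f ω := fun f => by
    simp only [hE, hprob, Function.uncurry]
  have hEX₁ : ∀ w, E (X₁ w) = n * π₁ w := fun w => by
    simp only [hE', hX₁]
    rw [sum_prod_mul_sum_apply hq fun x => if x.1 = w then 1 else 0, Fintype.card_fin,
      sum_uncurry_mul_ite_fst, hπ₁]
  have hEX₂ : ∀ u, E (X₂ u) = n * π₂ u := fun u => by
    simp only [hE', hX₂]
    rw [sum_prod_mul_sum_apply hq fun x => if x.2 = u then 1 else 0, Fintype.card_fin,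
      sum_uncurry_mul_ite_snd, hπ₂]
  refine ⟨fun w => by rw [hEX₁]; field_simp, fun u => by rw [hEX₂]; field_simp, fun w u => ?_⟩
  have h₁ := (hπ₁pos w).ne'
  have h₂ := (hπ₂pos u).ne'
  have hsum : ∀ ω, X₁ w ω / π₁ w - X₂ u ω / π₂ u = ∑ i,
      ((if (ω i).1 = w then 1 else 0) / π₁ w - (if (ω i).2 = u then 1 else 0) / π₂ u) := by
    intro ω
    rw [hX₁, hX₂, sum_div, sum_div, ← sum_sub_distrib]
  have hmean := sum_uncurry_mul_ite_div_sub_ite_div P w u (π₁ w) (π₂ u)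
  rw [← hπ₁, ← hπ₂, div_self h₁, div_self h₂, sub_self] at hmean
  simp only [hE', hsum]
  rw [sum_prod_mul_sq_sum_apply hq hmean, Fintype.card_fin,
    sum_uncurry_mul_sq_ite_div_sub_ite_div, ← hπ₁, ← hπ₂]
  field_simp
  ring

theorem onemer_identifiability_of_joint_distribution
    (L n : ℕ) (hL : 1 ≤ L) (hn : 1 ≤ n)
    (P : Fin L → Fin L → ℝ)
    (hP0 : ∀ w u, 0 ≤ P w u)
    (hP1 : ∑ w, ∑ u, P w u = 1)
    (π₁ π₂ : Fin L → ℝ)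
    (hπ₁ : ∀ w, π₁ w = ∑ u, P w u)
    (hπ₂ : ∀ u, π₂ u = ∑ w, P w u)
    (hπ₁pos : ∀ w, 0 < π₁ w)
    (hπ₂pos : ∀ u, 0 < π₂ u)
    (prob : (Fin n → Fin L × Fin L) → ℝ)
    (hprob : ∀ ω, prob ω = ∏ i, P (ω i).1 (ω i).2)
    (E : ((Fin n → Fin L × Fin L) → ℝ) → ℝ)
    (hE : ∀ f, E f = ∑ ω, prob ω * f ω)
    (X₁ X₂ : Fin L → (Fin n → Fin L × Fin L) → ℝ)
    (hX₁ : ∀ w ω, X₁ w ω = ∑ i : Fin n, if (ω i).1 = w then 1 else 0)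
    (hX₂ : ∀ w ω, X₂ w ω = ∑ i : Fin n, if (ω i).2 = w then 1 else 0) :
    (∀ w, π₁ w = (1 / (n : ℝ)) * E (X₁ w))
    ∧ (∀ u, π₂ u = (1 / (n : ℝ)) * E (X₂ u))
    ∧ (∀ w u, P w u = (1 / 2) * (π₁ w + π₂ u
        - (π₁ w * π₂ u / (n : ℝ)) *
          E (fun ω => (X₁ w ω / π₁ w - X₂ u ω / π₂ u) ^ 2))) :=
  onemer_identifiability_of_joint_distribution_general L n hn P hP1 π₁ π₂ hπ₁ hπ₂ hπ₁pos hπ₂pos prob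
    hprob E hE X₁ X₂ hX₁ hX₂
end

section
/- Under the three-sequence 1-mer model, fix u, v, w ∈ [L] and nonzero reals α, β, γ with α·π₁(u) + β·π₂(v) + γ·π₃(w) = 0, and set Y = α·X₁^u + β·X₂^v + γ·X₃^w. Then P(u,v,w) = (1/(6αβγ n))·E[Y³] − (1/2)·( ((α+β)/γ)·P₁₂(u,v) + ((α+γ)/β)·P₁₃(u,w) + ((β+γ)/α)·P₂₃(v,w) ) − (1/6)·( (α²/(βγ))·π₁(u) + (β²/(αγ))·π₂(v) + (γ²/(αβ))·π₃(w) ). -/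
/-!
Write `f(s) = α [s₁ = u] + β [s₂ = v] + γ [s₃ = w]` for a site triple `s`, so that
`Y = ∑ᵢ f(S(i))` is a sum of `n` i.i.d. terms, which have mean zero by the constraint on
`α, β, γ`. For such a sum the cross terms of the third moment vanish, so `E[Y³] = n E[f³]`.
Because indicators are idempotent, `f³` expands into one-, two- and three-way indicators,
whose expectations are `π`, the pairwise marginals and `P(u,v,w)` (the last with
coefficient `6αβγ`); solving for `P(u,v,w)` gives the formula.
-/

open Finset

section ProductWeights

variable {S : Type*} [Fintype S] (q : S → ℝ)

theorem sum_pi_fin_succ_prod_mul {n : ℕ} (g : (Fin (n + 1) → S) → ℝ) :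
    ∑ ω : Fin (n + 1) → S, (∏ i, q (ω i)) * g ω
      = ∑ s, q s * ∑ η : Fin n → S, (∏ i, q (η i)) * g (Fin.cons s η) := by
  rw [← (Fin.consEquiv fun _ => S).sum_comp, Fintype.sum_prod_type]
  simp only [mul_sum, Fin.prod_univ_succ, mul_assoc]
  rfl

theorem sum_pi_prod_eq_one (hq : ∑ s, q s = 1) (n : ℕ) :
    ∑ ω : Fin n → S, ∏ i, q (ω i) = 1 := by
  rw [← Fintype.prod_sum]
  simp [hq]

variable {q}

theorem sum_pi_prod_mul_sum_apply (hq : ∑ s, q s = 1) (f : S → ℝ) (n : ℕ) :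
    ∑ ω : Fin n → S, (∏ i, q (ω i)) * ∑ i, f (ω i) = n * ∑ s, q s * f s := by
  induction n with
  | zero => simp
  | succ n ih =>
    have hcons (s : S) : ∑ η : Fin n → S, (∏ i, q (η i)) * (f s + ∑ i, f (η i))
        = f s + n * ∑ s, q s * f s := by
      simp only [mul_add, sum_add_distrib, ← sum_mul, sum_pi_prod_eq_one q hq, ih]
      ring
    rw [sum_pi_fin_succ_prod_mul]
    simp only [Fin.sum_univ_succ, Fin.cons_zero, Fin.cons_succ, hcons]
    simp only [mul_add, sum_add_distrib, ← sum_mul, hq, Nat.cast_succ]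
    ring

theorem sum_pi_prod_mul_sum_apply_pow_three (hq : ∑ s, q s = 1) {f : S → ℝ}
    (hf : ∑ s, q s * f s = 0) (n : ℕ) :
    ∑ ω : Fin n → S, (∏ i, q (ω i)) * (∑ i, f (ω i)) ^ 3 = n * ∑ s, q s * f s ^ 3 := by
  induction n with
  | zero => simp
  | succ n ih =>
    have expand (a : ℝ) (w T : (Fin n → S) → ℝ) :
        ∑ η, w η * (a + T η) ^ 3 = a ^ 3 * ∑ η, w η + 3 * a ^ 2 * ∑ η, w η * T η
          + 3 * a * ∑ η, w η * T η ^ 2 + ∑ η, w η * T η ^ 3 := by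
      simp only [mul_sum, ← sum_add_distrib]
      exact sum_congr rfl fun _ _ => by ring
    have hcons (s : S) : ∑ η : Fin n → S, (∏ i, q (η i)) * (f s + ∑ i, f (η i)) ^ 3
        = f s ^ 3 + f s * (3 * ∑ η : Fin n → S, (∏ i, q (η i)) * (∑ i, f (η i)) ^ 2)
          + n * ∑ s, q s * f s ^ 3 := by
      rw [expand (f s) (fun η => ∏ i, q (η i)) (fun η => ∑ i, f (η i)),
        sum_pi_prod_eq_one q hq, sum_pi_prod_mul_sum_apply hq, hf, ih]
      ring
    rw [sum_pi_fin_succ_prod_mul]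
    simp only [Fin.sum_univ_succ, Fin.cons_zero, Fin.cons_succ, hcons]
    simp only [mul_add, sum_add_distrib, ← mul_assoc, ← sum_mul, hq, hf, Nat.cast_succ]
    ring

end ProductWeights

section SiteScore

variable {A B C : Type*} [DecidableEq A] [DecidableEq B] [DecidableEq C]

def siteScore (α β γ : ℝ) (u : A) (v : B) (w : C) (s : A × B × C) : ℝ :=
  α * (if s.1 = u then 1 else 0) + β * (if s.2.1 = v then 1 else 0)
    + γ * (if s.2.2 = w then 1 else 0)

theorem siteScore_pow_three (α β γ : ℝ) (u : A) (v : B) (w : C) (s : A × B × C) :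
    siteScore α β γ u v w s ^ 3
      = α ^ 3 * (if s.1 = u then 1 else 0) + β ^ 3 * (if s.2.1 = v then 1 else 0)
        + γ ^ 3 * (if s.2.2 = w then 1 else 0)
        + 3 * α * β * (α + β) * (if s.1 = u ∧ s.2.1 = v then 1 else 0)
        + 3 * α * γ * (α + γ) * (if s.1 = u ∧ s.2.2 = w then 1 else 0)
        + 3 * β * γ * (β + γ) * (if s.2.1 = v ∧ s.2.2 = w then 1 else 0)
        + 6 * α * β * γ * (if s.1 = u ∧ s.2.1 = v ∧ s.2.2 = w then 1 else 0) := by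
  unfold siteScore
  by_cases hu : s.1 = u <;> by_cases hv : s.2.1 = v <;> by_cases hw : s.2.2 = w <;>
    simp only [hu, hv, hw, and_self, and_true, and_false, ↓reduceIte] <;> ring

variable [Fintype A] [Fintype B] [Fintype C]

theorem sum_mul_siteScore (P : A → B → C → ℝ) (α β γ : ℝ) (u : A) (v : B) (w : C) :
    ∑ s : A × B × C, P s.1 s.2.1 s.2.2 * siteScore α β γ u v w s
      = α * ∑ y, ∑ z, P u y z + β * ∑ x, ∑ z, P x v z + γ * ∑ x, ∑ y, P x y w := by
  simp only [siteScore, mul_ite, mul_one, mul_zero, mul_add, sum_add_distrib,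
    Fintype.sum_prod_type, sum_ite_irrel, ← sum_mul, sum_const_zero, sum_ite_eq', mem_univ,
    ↓reduceIte]
  ring

theorem sum_mul_siteScore_pow_three (P : A → B → C → ℝ) (α β γ : ℝ) (u : A) (v : B) (w : C) :
    ∑ s : A × B × C, P s.1 s.2.1 s.2.2 * siteScore α β γ u v w s ^ 3
      = α ^ 3 * ∑ y, ∑ z, P u y z + β ^ 3 * ∑ x, ∑ z, P x v z + γ ^ 3 * ∑ x, ∑ y, P x y w
        + 3 * α * β * (α + β) * ∑ z, P u v z + 3 * α * γ * (α + γ) * ∑ y, P u y w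
        + 3 * β * γ * (β + γ) * ∑ x, P x v w + 6 * α * β * γ * P u v w := by
  simp only [siteScore_pow_three, mul_ite, mul_one, mul_zero, mul_add, ite_and, sum_add_distrib,
    Fintype.sum_prod_type, sum_ite_irrel, ← sum_mul, sum_const_zero, sum_ite_eq', mem_univ,
    ↓reduceIte]
  ring

end SiteScore

theorem threeway_identifiability_from_onemers_general
    (L n : ℕ) (hn : 1 ≤ n)
    (P : Fin L → Fin L → Fin L → ℝ)
    (hP1 : ∑ u, ∑ v, ∑ w, P u v w = 1)
    (π₁ π₂ π₃ : Fin L → ℝ)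
    (hπ₁ : ∀ u, π₁ u = ∑ v, ∑ w, P u v w)
    (hπ₂ : ∀ v, π₂ v = ∑ u, ∑ w, P u v w)
    (hπ₃ : ∀ w, π₃ w = ∑ u, ∑ v, P u v w)
    (P₁₂ P₁₃ P₂₃ : Fin L → Fin L → ℝ)
    (hP₁₂ : ∀ u v, P₁₂ u v = ∑ w, P u v w)
    (hP₁₃ : ∀ u w, P₁₃ u w = ∑ v, P u v w)
    (hP₂₃ : ∀ v w, P₂₃ v w = ∑ u, P u v w)
    (prob : (Fin n → Fin L × Fin L × Fin L) → ℝ)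
    (hprob : ∀ ω, prob ω = ∏ i, P (ω i).1 (ω i).2.1 (ω i).2.2)
    (E : ((Fin n → Fin L × Fin L × Fin L) → ℝ) → ℝ)
    (hE : ∀ f, E f = ∑ ω, prob ω * f ω)
    (X₁ X₂ X₃ : Fin L → (Fin n → Fin L × Fin L × Fin L) → ℝ)
    (hX₁ : ∀ a ω, X₁ a ω = ∑ i : Fin n, if (ω i).1 = a then 1 else 0)
    (hX₂ : ∀ a ω, X₂ a ω = ∑ i : Fin n, if (ω i).2.1 = a then 1 else 0)
    (hX₃ : ∀ a ω, X₃ a ω = ∑ i : Fin n, if (ω i).2.2 = a then 1 else 0)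
    (u v w : Fin L)
    (α β γ : ℝ) (hα : α ≠ 0) (hβ : β ≠ 0) (hγ : γ ≠ 0)
    (hconstraint : α * π₁ u + β * π₂ v + γ * π₃ w = 0)
    (Y : (Fin n → Fin L × Fin L × Fin L) → ℝ)
    (hY : ∀ ω, Y ω = α * X₁ u ω + β * X₂ v ω + γ * X₃ w ω) :
    P u v w = (1 / (6 * α * β * γ * (n : ℝ))) * E (fun ω => Y ω ^ 3)
      - (1 / 2) * (((α + β) / γ) * P₁₂ u v + ((α + γ) / β) * P₁₃ u w
          + ((β + γ) / α) * P₂₃ v w)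
      - (1 / 6) * ((α ^ 2 / (β * γ)) * π₁ u + (β ^ 2 / (α * γ)) * π₂ v
          + (γ ^ 2 / (α * β)) * π₃ w) := by
  have hq : ∑ s : Fin L × Fin L × Fin L, P s.1 s.2.1 s.2.2 = 1 := by
    simpa only [Fintype.sum_prod_type] using hP1
  have hmean : ∑ s, P s.1 s.2.1 s.2.2 * siteScore α β γ u v w s = 0 := by
    rw [sum_mul_siteScore, ← hπ₁, ← hπ₂, ← hπ₃, hconstraint]
  have hYsum (ω : Fin n → Fin L × Fin L × Fin L) : Y ω = ∑ i, siteScore α β γ u v w (ω i) := by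
    simp only [hY, hX₁, hX₂, hX₃, siteScore, mul_sum, ← sum_add_distrib]
  have hEY : E (fun ω => Y ω ^ 3) = n * (α ^ 3 * π₁ u + β ^ 3 * π₂ v + γ ^ 3 * π₃ w
      + 3 * α * β * (α + β) * P₁₂ u v + 3 * α * γ * (α + γ) * P₁₃ u w
      + 3 * β * γ * (β + γ) * P₂₃ v w + 6 * α * β * γ * P u v w) := by
    simp only [hE, hprob, hYsum]
    rw [sum_pi_prod_mul_sum_apply_pow_three hq hmean, sum_mul_siteScore_pow_three,
      ← hπ₁, ← hπ₂, ← hπ₃, ← hP₁₂, ← hP₁₃, ← hP₂₃]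
  have hn0 : (n : ℝ) ≠ 0 := by exact_mod_cast Nat.one_le_iff_ne_zero.mp hn
  rw [hEY]
  field_simp
  ring

theorem threeway_identifiability_from_onemers
    (L n : ℕ) (hL : 1 ≤ L) (hn : 1 ≤ n)
    (P : Fin L → Fin L → Fin L → ℝ)
    (hP0 : ∀ u v w, 0 ≤ P u v w)
    (hP1 : ∑ u, ∑ v, ∑ w, P u v w = 1)
    (π₁ π₂ π₃ : Fin L → ℝ)
    (hπ₁ : ∀ u, π₁ u = ∑ v, ∑ w, P u v w)
    (hπ₂ : ∀ v, π₂ v = ∑ u, ∑ w, P u v w)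
    (hπ₃ : ∀ w, π₃ w = ∑ u, ∑ v, P u v w)
    (hπ₁pos : ∀ u, 0 < π₁ u) (hπ₂pos : ∀ v, 0 < π₂ v) (hπ₃pos : ∀ w, 0 < π₃ w)
    (P₁₂ P₁₃ P₂₃ : Fin L → Fin L → ℝ)
    (hP₁₂ : ∀ u v, P₁₂ u v = ∑ w, P u v w)
    (hP₁₃ : ∀ u w, P₁₃ u w = ∑ v, P u v w)
    (hP₂₃ : ∀ v w, P₂₃ v w = ∑ u, P u v w)
    (prob : (Fin n → Fin L × Fin L × Fin L) → ℝ)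
    (hprob : ∀ ω, prob ω = ∏ i, P (ω i).1 (ω i).2.1 (ω i).2.2)
    (E : ((Fin n → Fin L × Fin L × Fin L) → ℝ) → ℝ)
    (hE : ∀ f, E f = ∑ ω, prob ω * f ω)
    (X₁ X₂ X₃ : Fin L → (Fin n → Fin L × Fin L × Fin L) → ℝ)
    (hX₁ : ∀ a ω, X₁ a ω = ∑ i : Fin n, if (ω i).1 = a then 1 else 0)
    (hX₂ : ∀ a ω, X₂ a ω = ∑ i : Fin n, if (ω i).2.1 = a then 1 else 0)
    (hX₃ : ∀ a ω, X₃ a ω = ∑ i : Fin n, if (ω i).2.2 = a then 1 else 0)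
    (u v w : Fin L)
    (α β γ : ℝ) (hα : α ≠ 0) (hβ : β ≠ 0) (hγ : γ ≠ 0)
    (hconstraint : α * π₁ u + β * π₂ v + γ * π₃ w = 0)
    (Y : (Fin n → Fin L × Fin L × Fin L) → ℝ)
    (hY : ∀ ω, Y ω = α * X₁ u ω + β * X₂ v ω + γ * X₃ w ω) :
    P u v w = (1 / (6 * α * β * γ * (n : ℝ))) * E (fun ω => Y ω ^ 3)
      - (1 / 2) * (((α + β) / γ) * P₁₂ u v + ((α + γ) / β) * P₁₃ u w
          + ((β + γ) / α) * P₂₃ v w)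
      - (1 / 6) * ((α ^ 2 / (β * γ)) * π₁ u + (β ^ 2 / (α * γ)) * π₂ v
          + (γ ^ 2 / (α * β)) * π₃ w) :=
  threeway_identifiability_from_onemers_general L n hn P hP1 π₁ π₂ π₃ hπ₁ hπ₂ hπ₃ P₁₂ P₁₃ P₂₃ hP₁₂
    hP₁₃ hP₂₃ prob hprob E hE X₁ X₂ X₃ hX₁ hX₂ hX₃ u v w α β γ hα hβ hγ hconstraint Y hY
end

section
/- For every integer k ≥ 1 there exist real numbers a, b with 0 < a < 3/4 and 0 < b < 3/4 such that 2·( 1 + 3(1 − (4/3)a)(1 − (4/3)b) )^k < ( 1 + 3(1 − (4/3)a)(1 − (4/3)b)² )^k + ( 1 + 3(1 − (4/3)a)³ )^k. (Consequently, for the naive expected squared-Euclidean k-mer distances on the four-taxon Jukes–Cantor tree with branch parameters a and b, the four-point inequality d₁₂ + d₃₄ < d₁₄ + d₂₃ fails, so the naive k-mer distance method is statistically inconsistent.) -/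
/-!
At `b = 3/4` the edges to leaves 1 and 4 are saturated (`1 - 4b/3 = 0`) and the inequality
reads `2 < 1 + (1 + 3(1 - 4a/3)³)^k`, which holds strictly for `a < 3/4` and `k ≥ 1`.
By continuity in `b` it persists for `b` slightly below `3/4`.
-/

open Filter Topology Set

lemma eventually_four_point_violation_nhds_three_quarters {k : ℕ} (hk : k ≠ 0) {a : ℝ}
    (ha : a < 3 / 4) :
    ∀ᶠ b in 𝓝 (3 / 4 : ℝ),
      2 * (1 + 3 * (1 - (4 / 3) * a) * (1 - (4 / 3) * b)) ^ k
        < (1 + 3 * (1 - (4 / 3) * a) * (1 - (4 / 3) * b) ^ 2) ^ k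
          + (1 + 3 * (1 - (4 / 3) * a) ^ 3) ^ k := by
  refine ContinuousAt.eventually_lt (by fun_prop) (by fun_prop) ?_
  have hq : 0 < 1 - (4 / 3) * a := by linarith
  have hpow : 1 < (1 + 3 * (1 - (4 / 3) * a) ^ 3) ^ k :=
    one_lt_pow₀ (lt_add_of_pos_right _ (by positivity)) hk
  norm_num
  linarith

theorem naive_kmer_distance_inconsistent (k : ℕ) (hk : 1 ≤ k) :
    ∃ a b : ℝ, 0 < a ∧ a < 3 / 4 ∧ 0 < b ∧ b < 3 / 4 ∧
      2 * (1 + 3 * (1 - (4 / 3) * a) * (1 - (4 / 3) * b)) ^ k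
        < (1 + 3 * (1 - (4 / 3) * a) * (1 - (4 / 3) * b) ^ 2) ^ k
          + (1 + 3 * (1 - (4 / 3) * a) ^ 3) ^ k := by
  have hviolation := eventually_four_point_violation_nhds_three_quarters
    (Nat.one_le_iff_ne_zero.mp hk) (a := 1 / 4) (by norm_num)
  obtain ⟨b, hb, ⟨hb0, hb1⟩⟩ := ((hviolation.filter_mono nhdsWithin_le_nhds).and
    (Ioo_mem_nhdsLT (by norm_num : (0 : ℝ) < 3 / 4))).exists
  exact ⟨1 / 4, b, by norm_num, by norm_num, hb0, hb1, hb⟩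
end
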